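/- For every L ≥ 2, Δ > 1 (with q ∈ (0,1) determined by Δ = (q + q^{-1})/2), and every 0 ≤ n ≤ L, the kink state ψ^{+-}_{[1,L]}(n) is a ground state of the XXZ Hamiltonian with kink boundary fields H^{+-}_{[1,L]} = −∑_{x=1}^{L-1} [Δ^{-1}(S¹_x S¹_{x+1} + S²_x S²_{x+1}) + (S³_x S³_{x+1} − 1/4)] − A(Δ)(S³_1 − S³_L): namely H^{+-}_{[1,L]} is positive semidefinite and H^{+-}_{[1,L]} ψ^{+-}_{[1,L]}(n) = 0. Similarly, the antikink state ψ^{-+}_{[1,L]}(n) satisfies H^{-+}_{[1,L]} ψ^{-+}_{[1,L]}(n) = 0 with H^{-+}_{[1,L]} = −∑_{x=1}^{L-1} [Δ^{-1}(S¹_x S¹_{x+1} + S²_x S²_{x+1}) + (S³_x S³_{x+1} − 1/4)] + A(Δ)(S³_1 − S³_L) positive semidefinite. -/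

import Mathlib

open scoped ComplexOrder

noncomputable section

/-- Configurations of a spin-1/2 chain of `L` sites: `0` = spin up, `1` = spin down. -/
abbrev Config (L : ℕ) := Fin L → Fin 2

/-- The spin-1/2 matrix `S¹` (one half the first Pauli matrix). -/
def S1 : Matrix (Fin 2) (Fin 2) ℂ := (1/2 : ℂ) • !![0, 1; 1, 0]

/-- The spin-1/2 matrix `S²` (one half the second Pauli matrix). -/
def S2 : Matrix (Fin 2) (Fin 2) ℂ := (1/2 : ℂ) • !![0, -Complex.I; Complex.I, 0]

/-- The spin-1/2 matrix `S³` (one half the third Pauli matrix). -/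
def S3 : Matrix (Fin 2) (Fin 2) ℂ := (1/2 : ℂ) • !![1, 0; 0, -1]

/-- A one-site matrix `M` acting on site `x` (0-indexed) of the chain of `L` sites,
as the identity on all the other sites (and the identity altogether if `x ≥ L`). -/
def siteOp (L : ℕ) (M : Matrix (Fin 2) (Fin 2) ℂ) (x : ℕ) :
    Matrix (Config L) (Config L) ℂ := fun σ τ =>
  if h : x < L then
    (if ∀ y : Fin L, (y : ℕ) ≠ x → σ y = τ y then M (σ ⟨x, h⟩) (τ ⟨x, h⟩) else 0)
  else (if σ = τ then 1 else 0)

/-- `A(Δ) = (1/2)√(1 − Δ⁻²)`. -/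
def Acoef (Δ : ℝ) : ℝ := (1/2) * Real.sqrt (1 - Δ⁻¹ ^ 2)

/-- Total third component of spin, `S³_tot = ∑ₓ S³ₓ`. -/
def S3tot (L : ℕ) : Matrix (Config L) (Config L) ℂ := ∑ x ∈ Finset.range L, siteOp L S3 x

/-- The bulk XXZ Hamiltonian `−∑ₓ [Δ⁻¹(S¹ₓS¹ₓ₊₁ + S²ₓS²ₓ₊₁) + (S³ₓS³ₓ₊₁ − 1/4)]`. -/
def XXZbulk (L : ℕ) (Δ : ℝ) : Matrix (Config L) (Config L) ℂ :=
  -(∑ x ∈ Finset.range (L - 1),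
      ((Δ⁻¹ : ℂ) • (siteOp L S1 x * siteOp L S1 (x+1) + siteOp L S2 x * siteOp L S2 (x+1))
        + (siteOp L S3 x * siteOp L S3 (x+1) - (1/4 : ℂ) • 1)))

/-- The XXZ Hamiltonian with `++` boundary fields. -/
def Hpp (L : ℕ) (Δ : ℝ) : Matrix (Config L) (Config L) ℂ :=
  XXZbulk L Δ - (Acoef Δ : ℂ) • (siteOp L S3 0 + siteOp L S3 (L-1))

/-- The XXZ Hamiltonian with kink (`+-`) boundary fields. -/
def Hpm (L : ℕ) (Δ : ℝ) : Matrix (Config L) (Config L) ℂ :=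
  XXZbulk L Δ - (Acoef Δ : ℂ) • (siteOp L S3 0 - siteOp L S3 (L-1))

/-- The XXZ Hamiltonian with antikink (`-+`) boundary fields. -/
def Hmp (L : ℕ) (Δ : ℝ) : Matrix (Config L) (Config L) ℂ :=
  XXZbulk L Δ + (Acoef Δ : ℂ) • (siteOp L S3 0 - siteOp L S3 (L-1))

/-- The sector `H_{L,n}`: the eigenspace of `S³_tot` with eigenvalue `L/2 − n`. -/
def sector (L n : ℕ) : Submodule ℂ (EuclideanSpace ℂ (Config L)) :=
  Module.End.eigenspace (Matrix.toEuclideanLin (S3tot L)) ((L : ℂ)/2 - n)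

/-- The set of down-spin sites of a configuration. -/
def downSet {ℓ : ℕ} (σ : Config ℓ) : Finset (Fin ℓ) := Finset.univ.filter (fun i => σ i = 1)

/-- The kink state `ψ^{+-}` with `m` down spins on a chain of `ℓ` sites (representing the
interval `[a,b]`, `ℓ = b−a+1`, site `i` ↔ `a+i`, so the weight `q^{b+1−x}` becomes `q^{ℓ−i}`):
the configuration with down spins at `x₁ < ⋯ < x_m` has coefficient `q^{∑ₖ (b+1−x_k)}`. -/
def kink (ℓ : ℕ) (q : ℝ) (m : ℕ) : Config ℓ → ℂ := fun σ =>
  if (downSet σ).card = m then (q : ℂ) ^ (∑ i ∈ downSet σ, (ℓ - (i : ℕ))) else 0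

/-- The antikink state `ψ^{-+}` with `m` down spins on a chain of `ℓ` sites (the weight
`q^{x+1−a}` becomes `q^{i+1}`). -/
def antikink (ℓ : ℕ) (q : ℝ) (m : ℕ) : Config ℓ → ℂ := fun σ =>
  if (downSet σ).card = m then (q : ℂ) ^ (∑ i ∈ downSet σ, ((i : ℕ) + 1)) else 0

/-- The tensor product of a state on the first `x` sites and a state on the last `L − x`
sites, as a state of the chain of `L` sites. -/
def tensorSplit {L : ℕ} (x : ℕ) (hx : x ≤ L) (f : Config x → ℂ) (g : Config (L - x) → ℂ) :
    EuclideanSpace ℂ (Config L) :=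
  (WithLp.equiv 2 (Config L → ℂ)).symm (fun σ =>
    f (fun i => σ ⟨i, lt_of_lt_of_le i.2 hx⟩) *
    g (fun j => σ ⟨x + (j : ℕ), by have := j.isLt; omega⟩))

/-- The droplet state `ξ_{L,n}(x) = ψ^{+-}_{[1,x]}(⌊n/2⌋) ⊗ ψ^{-+}_{[x+1,L]}(⌈n/2⌉)`. -/
def droplet (L : ℕ) (q : ℝ) (n x : ℕ) (hx : x ≤ L) : EuclideanSpace ℂ (Config L) :=
  tensorSplit x hx (kink x q (n / 2)) (antikink (L - x) q ((n + 1) / 2))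

/-- The index set `⌊n/2⌋ ≤ x ≤ L − ⌈n/2⌉` for the droplet states. -/
def dropletIdx (L n : ℕ) : Finset ℕ := Finset.Icc (n / 2) (L - (n + 1) / 2)

/-- The family of droplet states `ξ_{L,n}(x)`, `⌊n/2⌋ ≤ x ≤ L − ⌈n/2⌉`. -/
def dropletFamily (L : ℕ) (q : ℝ) (n : ℕ) : dropletIdx L n → EuclideanSpace ℂ (Config L) :=
  fun x => droplet L q n x ((Finset.mem_Icc.mp x.2).2.trans (Nat.sub_le _ _))

/-- The droplet subspace `K_{L,n}`. -/
def dropletSpace (L : ℕ) (q : ℝ) (n : ℕ) : Submodule ℂ (EuclideanSpace ℂ (Config L)) :=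
  Submodule.span ℂ (Set.range (dropletFamily L q n))

/-- The orthogonal projection onto a subspace, as an operator on the whole space. -/
def projOp {ι : Type*} [Fintype ι] (K : Submodule ℂ (EuclideanSpace ℂ ι)) :
    EuclideanSpace ℂ ι →L[ℂ] EuclideanSpace ℂ ι :=
  K.subtypeL.comp K.orthogonalProjectionOnto

/-- The all-spins-up vector. -/
def allUp (L : ℕ) : Config L → ℂ := fun σ => if σ = (fun _ => 0) then 1 else 0

end

/-!
Both Hamiltonians are frustration free. Distributing the boundary field telescopically over
the bonds writes `H^{+-}` as a sum over bonds of the projection `(1 + q²)⁻¹ |v⟩⟨v|` onto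
`v = q|↑↓⟩ − |↓↑⟩`, and `H^{-+}` likewise with `v = |↑↓⟩ − q|↓↑⟩`; such a sum is positive
semidefinite. Moving a down spin one site to the left multiplies the amplitude of `ψ^{+-}` by `q`
and that of `ψ^{-+}` by `q⁻¹`, so on every bond the state is orthogonal to `v` and is killed by
the bond term.
-/

open Matrix Function
open scoped Kronecker

section PairOperator

variable {ι α R : Type*} [DecidableEq ι] {i j : ι}

def pairSplit (hij : i ≠ j) :
    (ι → α) ≃ (α × α) × ({k : {k // k ≠ i} // k ≠ ⟨j, hij.symm⟩} → α) :=
  (Equiv.funSplitAt i α).trans <|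
    ((Equiv.refl α).prodCongr (Equiv.funSplitAt ⟨j, hij.symm⟩ α)).trans
      (Equiv.prodAssoc _ _ _).symm

theorem pairSplit_apply_fst (hij : i ≠ j) (σ : ι → α) : (pairSplit hij σ).1 = (σ i, σ j) := rfl

theorem pairSplit_snd_eq_iff (hij : i ≠ j) (σ τ : ι → α) :
    (pairSplit hij σ).2 = (pairSplit hij τ).2 ↔ ∀ k, k ≠ i → k ≠ j → σ k = τ k := by
  simp [pairSplit, funext_iff]

theorem pairSplit_symm_apply (hij : i ≠ j) (p : α × α) (σ : ι → α) :
    (pairSplit hij).symm (p, (pairSplit hij σ).2) = update (update σ i p.1) j p.2 := by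
  ext k
  by_cases hki : k = i
  · subst hki; simp [pairSplit, hij]
  · by_cases hkj : k = j
    · subst hkj; simp [pairSplit, hki]
    · simp [pairSplit, hki, hkj]

variable [Fintype ι] [Fintype α] [DecidableEq α] [CommSemiring R]

def pairOp (hij : i ≠ j) : Matrix (α × α) (α × α) R →ₐ[R] Matrix (ι → α) (ι → α) R where
  toFun K := (K ⊗ₖ (1 : Matrix _ _ R)).submatrix (pairSplit hij) (pairSplit hij)
  map_one' := by simp
  map_mul' K K' := by simp [← mul_kronecker_mul, submatrix_mul_equiv]
  map_zero' := by simp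
  map_add' K K' := by simp [add_kronecker, submatrix_add]
  commutes' r := by
    simp [Algebra.algebraMap_eq_smul_one, smul_kronecker, submatrix_smul]

theorem pairOp_apply (hij : i ≠ j) (K : Matrix (α × α) (α × α) R) (σ τ : ι → α) :
    pairOp hij K σ τ = if ∀ k, k ≠ i → k ≠ j → σ k = τ k then K (σ i, σ j) (τ i, τ j) else 0 := by
  simp [pairOp, kroneckerMap_apply, one_apply, pairSplit_apply_fst, ← pairSplit_snd_eq_iff hij]

theorem pairOp_mulVec_apply (hij : i ≠ j) (K : Matrix (α × α) (α × α) R) (ψ : (ι → α) → R)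
    (σ : ι → α) :
    (pairOp hij K *ᵥ ψ) σ =
      (K *ᵥ fun p => ψ (update (update σ i p.1) j p.2)) (σ i, σ j) := by
  change ((K ⊗ₖ (1 : Matrix _ _ R)).submatrix (pairSplit hij) (pairSplit hij) *ᵥ ψ) σ = _
  rw [submatrix_mulVec_equiv]
  simp [mulVec, dotProduct, Fintype.sum_prod_type, kroneckerMap_apply, one_apply,
    ← pairSplit_symm_apply hij, pairSplit_apply_fst]

theorem Matrix.PosSemidef.pairOp {𝕜 : Type*} [RCLike 𝕜] (hij : i ≠ j)
    {K : Matrix (α × α) (α × α) 𝕜} (hK : K.PosSemidef) : (pairOp hij K).PosSemidef :=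
  (hK.kronecker PosSemidef.one).submatrix _

end PairOperator

section SiteOp

variable {L : ℕ}

theorem siteOp_apply (M : Matrix (Fin 2) (Fin 2) ℂ) (i : Fin L) (σ τ : Config L) :
    siteOp L M i σ τ = if ∀ k, k ≠ i → σ k = τ k then M (σ i) (τ i) else 0 := by
  simp [siteOp, Fin.val_ne_iff]

theorem siteOp_eq_pairOp_left {i j : Fin L} (hij : i ≠ j) (M : Matrix (Fin 2) (Fin 2) ℂ) :
    siteOp L M i = pairOp hij (M ⊗ₖ 1) := by
  ext σ τ
  rw [siteOp_apply, pairOp_apply, kroneckerMap_apply, one_apply]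
  grind

theorem siteOp_eq_pairOp_right {i j : Fin L} (hij : i ≠ j) (M : Matrix (Fin 2) (Fin 2) ℂ) :
    siteOp L M j = pairOp hij (1 ⊗ₖ M) := by
  ext σ τ
  rw [siteOp_apply, pairOp_apply, kroneckerMap_apply, one_apply]
  grind

end SiteOp

section Chain

variable {α R : Type*} [Fintype α] [DecidableEq α] {L : ℕ}

def bondLeft (x : Fin (L - 1)) : Fin L := ⟨x, by omega⟩

def bondRight (x : Fin (L - 1)) : Fin L := ⟨x + 1, by omega⟩

theorem bondLeft_ne_bondRight (x : Fin (L - 1)) : bondLeft x ≠ bondRight x := by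
  simp [bondLeft, bondRight, Fin.ext_iff]

variable (L) in
def bondSum [CommSemiring R] (K : Matrix (α × α) (α × α) R) :
    Matrix (Fin L → α) (Fin L → α) R :=
  ∑ x : Fin (L - 1), pairOp (bondLeft_ne_bondRight x) K

theorem Matrix.PosSemidef.bondSum {𝕜 : Type*} [RCLike 𝕜] {K : Matrix (α × α) (α × α) 𝕜}
    (hK : K.PosSemidef) : (bondSum L K).PosSemidef :=
  posSemidef_sum _ fun _ _ => hK.pairOp _

theorem bondSum_mulVec_eq_zero [CommSemiring R] {K : Matrix (α × α) (α × α) R}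
    {ψ : (Fin L → α) → R}
    (h : ∀ (x : Fin (L - 1)) (σ : Fin L → α),
      K *ᵥ (fun p => ψ (update (update σ (bondLeft x) p.1) (bondRight x) p.2)) = 0) :
    bondSum L K *ᵥ ψ = 0 := by
  rw [bondSum, sum_mulVec]
  refine Finset.sum_eq_zero fun x _ => funext fun σ => ?_
  rw [pairOp_mulVec_apply, h, Pi.zero_apply, Pi.zero_apply]

end Chain

noncomputable def bondHam (J c : ℂ) : Matrix (Fin 2 × Fin 2) (Fin 2 × Fin 2) ℂ :=
  -(J • (S1 ⊗ₖ S1 + S2 ⊗ₖ S2) + (S3 ⊗ₖ S3 - (1/4 : ℂ) • 1)) + c • (S3 ⊗ₖ 1 - 1 ⊗ₖ S3)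

theorem XXZbulk_add_boundary_eq_bondSum (L : ℕ) (Δ : ℝ) (c : ℂ) :
    XXZbulk L Δ + c • (siteOp L S3 0 - siteOp L S3 (L - 1)) =
      bondSum L (bondHam (Δ : ℂ)⁻¹ c) := by
  -- the boundary field telescopes into one term `S³ₓ − S³ₓ₊₁` per bond
  rw [← Finset.sum_range_sub' (fun x => siteOp L S3 x), XXZbulk, Finset.smul_sum,
    ← Finset.sum_neg_distrib, ← Finset.sum_add_distrib, Finset.sum_range, bondSum]
  refine Finset.sum_congr rfl fun x _ => ?_
  have hij := bondLeft_ne_bondRight x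
  have hl (M) : siteOp L M x = pairOp hij (M ⊗ₖ 1) := siteOp_eq_pairOp_left hij M
  have hr (M) : siteOp L M (x + 1) = pairOp hij (1 ⊗ₖ M) := siteOp_eq_pairOp_right hij M
  simp only [hl, hr, ← map_mul, ← mul_kronecker_mul, Matrix.mul_one, Matrix.one_mul, bondHam,
    map_add, map_sub, map_neg, map_smul, map_one]

-- `a|↑↓⟩ − b|↓↑⟩`
def singlet (a b : ℝ) : Fin 2 × Fin 2 → ℂ := fun p =>
  if p = (0, 1) then a else if p = (1, 0) then -b else 0

noncomputable def singletProj (a b : ℝ) : Matrix (Fin 2 × Fin 2) (Fin 2 × Fin 2) ℂ :=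
  (((a ^ 2 + b ^ 2)⁻¹ : ℝ) : ℂ) • vecMulVec (singlet a b) (star (singlet a b))

theorem posSemidef_singletProj (a b : ℝ) : (singletProj a b).PosSemidef :=
  (posSemidef_vecMulVec_self_star _).smul (Complex.zero_le_real.mpr (by positivity))

theorem singletProj_mulVec_eq_zero {a b : ℝ} {w : Fin 2 × Fin 2 → ℂ}
    (h : a * w (0, 1) = b * w (1, 0)) : singletProj a b *ᵥ w = 0 := by
  have hdot : star (singlet a b) ⬝ᵥ w = 0 := by
    simp [dotProduct, Fintype.sum_prod_type, singlet, h]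
  rw [singletProj, smul_mulVec, vecMulVec_mulVec, hdot]
  simp

theorem bondHam_eq_singletProj {a b : ℝ} (hab : a ^ 2 + b ^ 2 ≠ 0) {J c : ℂ}
    (hJ : J * (a ^ 2 + b ^ 2) = 2 * a * b) (hc : 2 * c * (a ^ 2 + b ^ 2) = a ^ 2 - b ^ 2) :
    bondHam J c = singletProj a b := by
  have hab' : (a : ℂ) ^ 2 + (b : ℂ) ^ 2 ≠ 0 := by exact_mod_cast hab
  obtain rfl : J = 2 * a * b / (a ^ 2 + b ^ 2) := by rw [eq_div_iff hab', hJ]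
  obtain rfl : c = (a ^ 2 - b ^ 2) / (2 * (a ^ 2 + b ^ 2)) := by
    rw [eq_div_iff (mul_ne_zero two_ne_zero hab'), ← hc]; ring
  ext ⟨p₁, p₂⟩ ⟨r₁, r₂⟩
  fin_cases p₁ <;> fin_cases p₂ <;> fin_cases r₁ <;> fin_cases r₂ <;>
    simp [bondHam, singletProj, singlet, S1, S2, S3, vecMulVec, kroneckerMap_apply, one_apply] <;>
    field_simp <;> grind [Complex.I_sq]

theorem inv_half_add_inv (q : ℝ) : ((q + q⁻¹) / 2)⁻¹ = 2 * q / (q ^ 2 + 1) := by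
  rcases eq_or_ne q 0 with rfl | hq
  · simp
  · field_simp

theorem Acoef_half_add_inv {q : ℝ} (hq : |q| ≤ 1) :
    Acoef ((q + q⁻¹) / 2) = (1 - q ^ 2) / (2 * (q ^ 2 + 1)) := by
  have hq2 : q ^ 2 ≤ 1 := sq_le_one_iff_abs_le_one q |>.mpr hq
  have h : 1 - ((q + q⁻¹) / 2)⁻¹ ^ 2 = ((1 - q ^ 2) / (q ^ 2 + 1)) ^ 2 := by
    rw [inv_half_add_inv]; field_simp; ring
  rw [Acoef, h, Real.sqrt_sq (div_nonneg (by linarith) (by positivity))]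
  field_simp

theorem bondHam_kink {q : ℝ} (hq : |q| ≤ 1) :
    bondHam (((q + q⁻¹) / 2 : ℝ) : ℂ)⁻¹ (-(Acoef ((q + q⁻¹) / 2) : ℂ)) = singletProj q 1 := by
  have hq' : (q : ℂ) ^ 2 + 1 ≠ 0 := by exact_mod_cast (by positivity : q ^ 2 + 1 ≠ 0)
  refine bondHam_eq_singletProj (by positivity) ?_ ?_
  · rw [← Complex.ofReal_inv, inv_half_add_inv]; push_cast; field_simp
  · rw [Acoef_half_add_inv hq]; push_cast; field_simp; ring

theorem bondHam_antikink {q : ℝ} (hq : |q| ≤ 1) :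
    bondHam (((q + q⁻¹) / 2 : ℝ) : ℂ)⁻¹ (Acoef ((q + q⁻¹) / 2) : ℂ) = singletProj 1 q := by
  have hq' : (q : ℂ) ^ 2 + 1 ≠ 0 := by exact_mod_cast (by positivity : q ^ 2 + 1 ≠ 0)
  refine bondHam_eq_singletProj (by positivity) ?_ ?_
  · rw [← Complex.ofReal_inv, inv_half_add_inv]; push_cast; field_simp; ring
  · rw [Acoef_half_add_inv hq]; push_cast; field_simp; ring

section WeightedState

variable {ℓ : ℕ}

def weightedState (w : Fin ℓ → ℕ) (z : ℂ) (m : ℕ) : Config ℓ → ℂ := fun σ =>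
  if (downSet σ).card = m then z ^ (∑ i ∈ downSet σ, w i) else 0

theorem weightedState_update_swap {w : Fin ℓ → ℕ} {i j : Fin ℓ} (hij : i ≠ j)
    (hw : w i = w j + 1) (z : ℂ) (m : ℕ) (σ : Config ℓ) :
    weightedState w z m (update (update σ i 1) j 0) =
      z * weightedState w z m (update (update σ i 0) j 1) := by
  set D := ((downSet σ).erase i).erase j
  have hiD : i ∉ D := by simp [D]
  have hjD : j ∉ D := by simp [D]
  have h10 : downSet (update (update σ i 1) j 0) = insert i D := by
    ext k; simp [D, downSet, update_apply]; grind
  have h01 : downSet (update (update σ i 0) j 1) = insert j D := by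
    ext k; simp [D, downSet, update_apply]; grind
  simp only [weightedState, h10, h01, Finset.card_insert_of_notMem hiD,
    Finset.card_insert_of_notMem hjD, Finset.sum_insert hiD, Finset.sum_insert hjD, hw]
  split_ifs <;> ring

theorem kink_eq_weightedState (q : ℝ) (m : ℕ) :
    kink ℓ q m = weightedState (fun i => ℓ - i) q m := rfl

theorem antikink_eq_weightedState (q : ℝ) (m : ℕ) :
    antikink ℓ q m = weightedState (fun i => i + 1) q m := rfl

end WeightedState

theorem kink_update_bond {L : ℕ} (q : ℝ) (n : ℕ) (x : Fin (L - 1)) (σ : Config L) :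
    q * kink L q n (update (update σ (bondLeft x) 0) (bondRight x) 1) =
      kink L q n (update (update σ (bondLeft x) 1) (bondRight x) 0) := by
  rw [kink_eq_weightedState]
  exact (weightedState_update_swap (bondLeft_ne_bondRight x)
    (by simp only [bondLeft, bondRight]; omega) _ _ _).symm

theorem antikink_update_bond {L : ℕ} (q : ℝ) (n : ℕ) (x : Fin (L - 1)) (σ : Config L) :
    antikink L q n (update (update σ (bondLeft x) 0) (bondRight x) 1) =
      q * antikink L q n (update (update σ (bondLeft x) 1) (bondRight x) 0) := by
  have hne := bondLeft_ne_bondRight x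
  rw [update_comm hne, update_comm hne, antikink_eq_weightedState]
  exact weightedState_update_swap hne.symm (by simp [bondLeft, bondRight]) _ _ _

open Matrix in
theorem kink_antikink_ground_states_general
    (L : ℕ) (Δ q : ℝ) (hq0 : 0 < q) (hq1 : q < 1)
    (hΔ : Δ = (q + q⁻¹) / 2) (n : ℕ) :
    (Hpm L Δ).PosSemidef ∧ Hpm L Δ *ᵥ kink L q n = 0 ∧
    (Hmp L Δ).PosSemidef ∧ Hmp L Δ *ᵥ antikink L q n = 0 := by
  subst hΔ
  have hq : |q| ≤ 1 := abs_le.mpr ⟨by linarith, hq1.le⟩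
  have hpm : Hpm L ((q + q⁻¹) / 2) = bondSum L (singletProj q 1) := by
    rw [Hpm, sub_eq_add_neg, ← neg_smul, XXZbulk_add_boundary_eq_bondSum, bondHam_kink hq]
  have hmp : Hmp L ((q + q⁻¹) / 2) = bondSum L (singletProj 1 q) := by
    rw [Hmp, XXZbulk_add_boundary_eq_bondSum, bondHam_antikink hq]
  rw [hpm, hmp]
  refine ⟨(posSemidef_singletProj q 1).bondSum, bondSum_mulVec_eq_zero fun x σ => ?_,
    (posSemidef_singletProj 1 q).bondSum, bondSum_mulVec_eq_zero fun x σ => ?_⟩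
  · exact singletProj_mulVec_eq_zero (by simpa using kink_update_bond q n x σ)
  · exact singletProj_mulVec_eq_zero (by simpa using antikink_update_bond q n x σ)

open Matrix in
/-- the kink state `ψ^{+-}_{[1,L]}(n)` is a ground state of the XXZ
Hamiltonian with kink boundary fields: `H^{+-}_{[1,L]}` is positive semidefinite and
annihilates it; similarly for the antikink state and `H^{-+}_{[1,L]}`. -/
theorem kink_antikink_ground_states
    (L : ℕ) (hL : 2 ≤ L) (Δ q : ℝ) (hq0 : 0 < q) (hq1 : q < 1)
    (hΔ : Δ = (q + q⁻¹) / 2) (n : ℕ) (hn : n ≤ L) :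
    (Hpm L Δ).PosSemidef ∧ Hpm L Δ *ᵥ kink L q n = 0 ∧
    (Hmp L Δ).PosSemidef ∧ Hmp L Δ *ᵥ antikink L q n = 0 :=
  kink_antikink_ground_states_general L Δ q hq0 hq1 hΔ n
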